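/- arXiv:2506.02778 — 6 statements merged into one kernel-verified Lean document; each statement's English description precedes it below -/
import Mathlib

section
/- For commuting real numbers (scalar case of commuting operators) a, b and t > 0, and any k ≥ 1, the identity φ_k(t(a+b)) - k! φ_k(ta) φ_k(tb) = (k/(k-1)!) ∫₀¹∫₀¹∫_η^ξ t²(1-η) a e^{t(1-σ)a} b φ₁(t(1-η)b) (ηξ)^{k-1} dσ dη dξ holds, where the inner integral is a signed integral from η to ξ. -/
open scoped Nat

/-! After integrating out `σ` and using `z φ₁(z) = e^z - 1`, the integrand becomes
`(e^{(1-η)x} - e^{(1-ξ)x}) (e^{(1-η)y} - 1) (ηξ)^{k-1}` with `x = ta`, `y = tb`. Since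
`e^{(1-η)x} e^{(1-η)y} = e^{(1-η)(x+y)}`, this is a sum of two products of a function of `η` with a
function of `ξ`, so the double integral factorises into the moments
`M_c = ∫₀¹ e^{(1-s)c} s^{k-1} ds = (k-1)! φ_k(c)` and `∫₀¹ s^{k-1} ds = 1/k`; the two mixed terms
`M_x / k` cancel and what is left is `(k-1)!/k · (φ_k(x+y) - k! φ_k(x) φ_k(y))`. -/

/-- `φ_0(z) = e^z` and `φ_k(z) = ∫₀¹ e^{(1-ξ)z} ξ^{k-1}/(k-1)! dξ` for `k ≥ 1`. -/
noncomputable def phiR (k : ℕ) (z : ℝ) : ℝ :=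
  if k = 0 then Real.exp z
  else ∫ ξ in (0:ℝ)..1, Real.exp ((1 - ξ) * z) * ξ ^ (k - 1) / ((k-1)! : ℝ)

noncomputable def expMoment (m : ℕ) (z : ℝ) : ℝ :=
  ∫ s in (0:ℝ)..1, Real.exp ((1 - s) * z) * s ^ m

lemma phiR_succ (m : ℕ) (z : ℝ) : phiR (m + 1) z = expMoment m z / m ! := by
  simp only [phiR, expMoment, Nat.succ_ne_zero, if_false, Nat.add_sub_cancel,
    intervalIntegral.integral_div]

lemma mul_integral_exp_one_sub_mul (z η ξ : ℝ) :
    z * ∫ σ in η..ξ, Real.exp ((1 - σ) * z) =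
      Real.exp ((1 - η) * z) - Real.exp ((1 - ξ) * z) := by
  rw [← intervalIntegral.integral_const_mul,
    intervalIntegral.integral_eq_sub_of_hasDerivAt (f := fun σ => -Real.exp ((1 - σ) * z))]
  · ring
  · intro σ _
    have h := (((hasDerivAt_id σ).const_sub 1).mul_const z).exp.neg
    simp only [id] at h
    exact h.congr_deriv (by ring)
  · exact (by fun_prop : Continuous fun σ => z * Real.exp ((1 - σ) * z)).intervalIntegrable _ _

lemma mul_phiR_one (z : ℝ) : z * phiR 1 z = Real.exp z - 1 := by
  have h := mul_integral_exp_one_sub_mul z 0 1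
  simp only [sub_zero, one_mul, sub_self, zero_mul, Real.exp_zero] at h
  simpa [phiR] using h

lemma integral_integral_mul_add_mul {u₁ v₁ u₂ v₂ : ℝ → ℝ} {a b c d : ℝ}
    (hu₁ : IntervalIntegrable u₁ MeasureTheory.volume c d)
    (hu₂ : IntervalIntegrable u₂ MeasureTheory.volume c d)
    (hv₁ : IntervalIntegrable v₁ MeasureTheory.volume a b)
    (hv₂ : IntervalIntegrable v₂ MeasureTheory.volume a b) :
    ∫ ξ in a..b, ∫ η in c..d, (u₁ η * v₁ ξ + u₂ η * v₂ ξ) =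
      (∫ η in c..d, u₁ η) * (∫ ξ in a..b, v₁ ξ) + (∫ η in c..d, u₂ η) * ∫ ξ in a..b, v₂ ξ := by
  simp only [intervalIntegral.integral_add (hu₁.mul_const _) (hu₂.mul_const _),
    intervalIntegral.integral_mul_const]
  rw [intervalIntegral.integral_add (hv₁.const_mul _) (hv₂.const_mul _),
    intervalIntegral.integral_const_mul, intervalIntegral.integral_const_mul]

theorem phiR_succ_add_sub_mul (m : ℕ) (x y : ℝ) :
    phiR (m + 1) (x + y) - ((m + 1)! : ℝ) * phiR (m + 1) x * phiR (m + 1) y =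
      (((m + 1 : ℕ) : ℝ) / (m ! : ℝ)) *
        ∫ ξ in (0:ℝ)..1, ∫ η in (0:ℝ)..1, ∫ σ in η..ξ,
          x * Real.exp ((1 - σ) * x) * ((1 - η) * y * phiR 1 ((1 - η) * y)) * (η * ξ) ^ m := by
  set f : ℝ → ℝ → ℝ := fun c s => Real.exp ((1 - s) * c) * s ^ m
  have hM : ∀ c, ∫ s in (0:ℝ)..1, f c s = expMoment m c := fun c => rfl
  have hf : ∀ c, IntervalIntegrable (f c) MeasureTheory.volume 0 1 := fun c =>
    (by fun_prop : Continuous (f c)).intervalIntegrable _ _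
  have hp : IntervalIntegrable (fun s : ℝ => s ^ m) MeasureTheory.volume 0 1 :=
    (continuous_pow m).intervalIntegrable _ _
  have hsplit : ∀ ξ η : ℝ,
      (∫ σ in η..ξ,
        x * Real.exp ((1 - σ) * x) * ((1 - η) * y * phiR 1 ((1 - η) * y)) * (η * ξ) ^ m) =
        (f (x + y) η - f x η) * ξ ^ m + (η ^ m - f y η) * f x ξ := by
    intro ξ η
    rw [intervalIntegral.integral_mul_const, intervalIntegral.integral_mul_const,
      intervalIntegral.integral_const_mul, mul_integral_exp_one_sub_mul, mul_phiR_one]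
    simp only [f, mul_add, Real.exp_add]
    ring
  simp only [hsplit]
  rw [integral_integral_mul_add_mul ((hf _).sub (hf _)) (hp.sub (hf _)) hp (hf _),
    intervalIntegral.integral_sub (hf _) (hf _), intervalIntegral.integral_sub hp (hf _),
    integral_pow, hM, hM, hM]
  simp only [phiR_succ, Nat.factorial_succ]
  push_cast
  field_simp
  ring

theorem phi_splitting_identity_general (k : ℕ) (a b t : ℝ) :
    phiR k (t * (a + b)) - (k ! : ℝ) * phiR k (t * a) * phiR k (t * b) =
      ((k : ℝ) / ((k-1)! : ℝ)) *
        ∫ ξ in (0:ℝ)..1, ∫ η in (0:ℝ)..1, ∫ σ in η..ξ,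
          t ^ 2 * (1 - η) * a * Real.exp (t * (1 - σ) * a) * b *
            phiR 1 (t * (1 - η) * b) * (η * ξ) ^ (k - 1) := by
  rcases k with _ | m
  · simp [phiR, mul_add, Real.exp_add]
  have hintegrand : ∀ ξ η σ : ℝ,
      t ^ 2 * (1 - η) * a * Real.exp (t * (1 - σ) * a) * b * phiR 1 (t * (1 - η) * b) *
          (η * ξ) ^ m =
        t * a * Real.exp ((1 - σ) * (t * a)) *
          ((1 - η) * (t * b) * phiR 1 ((1 - η) * (t * b))) * (η * ξ) ^ m := by
    intro ξ η σ
    rw [show t * (1 - σ) * a = (1 - σ) * (t * a) by ring,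
      show t * (1 - η) * b = (1 - η) * (t * b) by ring]
    ring
  simp only [Nat.add_sub_cancel, hintegrand, mul_add]
  exact phiR_succ_add_sub_mul m (t * a) (t * b)

theorem phi_splitting_identity (k : ℕ) (hk : 1 ≤ k) (a b t : ℝ) (ht : 0 < t) :
    phiR k (t * (a + b)) - (k ! : ℝ) * phiR k (t * a) * phiR k (t * b) =
      ((k : ℝ) / ((k-1)! : ℝ)) *
        ∫ ξ in (0:ℝ)..1, ∫ η in (0:ℝ)..1, ∫ σ in η..ξ,
          t ^ 2 * (1 - η) * a * Real.exp (t * (1 - σ) * a) * b *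
            phiR 1 (t * (1 - η) * b) * (η * ξ) ^ (k - 1) :=
  phi_splitting_identity_general k a b t
end

section
/- Discrete Gronwall lemma with weakly singular kernel: let α ∈ [0,1), let (ε_n) be a sequence of nonnegative reals satisfying ε_n ≤ a τ Σ_{k=1}^{n-1} t_{n-k}^{-α} ε_k + b for all n ≥ 1, where t_j = jτ and a, b ≥ 0, τ > 0, nτ ≤ T. Then there is a constant C depending only on a, α, T such that ε_n ≤ C b for all n with nτ ≤ T. -/
/-! The kernel mass `τ ∑_{m ≤ M} t_m^{-α}` is at most `t_M^{1-α}/(1-α)`, by concavity of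
`t ↦ t^{1-α}`. Hence the lags of length at most some `δ > 0` (depending on `a` and `α` only)
carry mass at most `1/2`, and all lags up to `T` carry mass at most `A = a T^{1-α}/(1-α)`.
Cut time into blocks of `L + 1 = ⌊δ/τ⌋ + 1` steps; by strong induction `ε_n ≤ Q^{j+1} b` on the
`j`-th block, with `Q = 2A + 2`: the short lags cost at most half of the current bound, while
the long ones only reach earlier blocks, where the bound is smaller by a factor `Q`. There are
at most `T/δ` blocks before time `T`, whatever `τ` is. -/

open Finset

theorem rpow_one_sub_add_mul_sub_mul_rpow_neg_le {α x y : ℝ} (hα0 : 0 ≤ α) (hα1 : α ≤ 1)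
    (hx : 0 ≤ x) (hxy : x ≤ y) :
    x ^ (1 - α) + (1 - α) * (y - x) * y ^ (-α) ≤ y ^ (1 - α) := by
  rcases hxy.eq_or_lt with rfl | hlt
  · simp
  have hy : 0 < y := hx.trans_lt hlt
  have amgm : x ^ (1 - α) * y ^ α ≤ (1 - α) * x + α * y :=
    Real.geom_mean_le_arith_mean2_weighted (by linarith) hα0 hx hy.le (by ring)
  have hyα : y ^ α * y ^ (-α) = 1 := by rw [← Real.rpow_add hy]; simp
  have hy1α : y * y ^ (-α) = y ^ (1 - α) := by
    rw [sub_eq_add_neg, Real.rpow_add hy, Real.rpow_one]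
  calc x ^ (1 - α) + (1 - α) * (y - x) * y ^ (-α)
      = (x ^ (1 - α) * y ^ α + (1 - α) * (y - x)) * y ^ (-α) := by
        linear_combination x ^ (1 - α) * hyα.symm
    _ ≤ ((1 - α) * x + α * y + (1 - α) * (y - x)) * y ^ (-α) := by gcongr
    _ = y ^ (1 - α) := by rw [← hy1α]; ring

theorem sum_Icc_mul_rpow_neg_le_rpow_one_sub_div {α τ : ℝ} (hα0 : 0 ≤ α) (hα1 : α < 1) (hτ : 0 ≤ τ) (M : ℕ) :
    ∑ m ∈ Icc 1 M, τ * (m * τ) ^ (-α) ≤ (M * τ) ^ (1 - α) / (1 - α) := by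
  have h1α : 0 < 1 - α := by linarith
  induction M with
  | zero => simp [Real.zero_rpow h1α.ne']
  | succ M ih =>
    have step := rpow_one_sub_add_mul_sub_mul_rpow_neg_le hα0 hα1.le (x := M * τ)
      (y := (M + 1 : ℕ) * τ) (by positivity) (by gcongr; simp)
    rw [sum_Icc_succ_top (by omega), le_div_iff₀ h1α]
    rw [le_div_iff₀ h1α] at ih
    push_cast at step ⊢
    linarith

theorem sum_Icc_one_sub_reflect {M : Type*} [AddCommMonoid M] (f : ℕ → M) (n : ℕ) :
    ∑ k ∈ Icc 1 (n - 1), f (n - k) = ∑ m ∈ Icc 1 (n - 1), f m := by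
  rcases Nat.eq_zero_or_pos n with rfl | hn
  · rfl
  have hIcc : Icc 1 (n - 1) = Ico 1 n := by ext; simp; omega
  rw [hIcc, sum_Ico_reflect f 1 le_self_add, Nat.add_sub_cancel, Nat.add_sub_cancel_left]

theorem le_pow_mul_of_le_sum_kernel_mul_add {κ ε : ℕ → ℝ} {b A : ℝ} {L N : ℕ}
    (hκ : ∀ m, 0 ≤ κ m) (hb : 0 ≤ b)
    (hnear : ∑ m ∈ Icc 1 L, κ m ≤ 1 / 2) (hmass : ∑ m ∈ Icc 1 N, κ m ≤ A)
    (hrec : ∀ n, 1 ≤ n → n ≤ N → ε n ≤ ∑ k ∈ Icc 1 (n - 1), κ (n - k) * ε k + b) :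
    ∀ n, 1 ≤ n → n ≤ N → ε n ≤ (2 * A + 2) ^ (n / (L + 1) + 1) * b := by
  set Q := 2 * A + 2
  have hA : 0 ≤ A := (sum_nonneg fun m _ => hκ m).trans hmass
  have hQ : 1 ≤ Q := by linarith
  intro n
  induction n using Nat.strong_induction_on with | _ n ih => ?_
  intro hn hnN
  set ψ := Q ^ (n / (L + 1))
  have hψ : 1 ≤ ψ := one_le_pow₀ hQ
  let w : ℕ → ℝ := fun m => (if m ≤ L then Q else 0) + 1
  have hprev : ∀ k ∈ Icc 1 (n - 1), ε k ≤ w (n - k) * ψ * b := by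
    intro k hk
    obtain ⟨hk1, hkn⟩ := mem_Icc.1 hk
    refine (ih k (by omega) hk1 (by omega)).trans ?_
    by_cases hlag : n - k ≤ L
    · calc Q ^ (k / (L + 1) + 1) * b ≤ Q ^ (n / (L + 1) + 1) * b := by
            gcongr
            omega
        _ ≤ w (n - k) * ψ * b := by simp only [w, if_pos hlag, pow_succ]; nlinarith
    · have hblock : k / (L + 1) + 1 ≤ n / (L + 1) := by
        rw [← Nat.add_div_right _ (Nat.succ_pos L)]
        exact Nat.div_le_div_right (by omega)
      calc Q ^ (k / (L + 1) + 1) * b ≤ ψ * b := by gcongr; exact pow_le_pow_right₀ hQ hblock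
        _ = w (n - k) * ψ * b := by simp [w, hlag]
  have hweight : ∑ m ∈ Icc 1 (n - 1), κ m * w m ≤ Q / 2 + A := by
    have hfilter : {m ∈ Icc 1 (n - 1) | m ≤ L} ⊆ Icc 1 L := by
      intro m; simp only [mem_filter, mem_Icc]; omega
    calc ∑ m ∈ Icc 1 (n - 1), κ m * w m
        = Q * ∑ m ∈ Icc 1 (n - 1) with m ≤ L, κ m + ∑ m ∈ Icc 1 (n - 1), κ m := by
          simp only [w, mul_add, mul_one, sum_add_distrib, sum_filter, mul_sum]
          congr 1; refine sum_congr rfl fun m _ => ?_; split_ifs <;> ring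
      _ ≤ Q * (1 / 2) + A := by
          gcongr
          · exact (sum_le_sum_of_subset_of_nonneg hfilter fun m _ _ => hκ m).trans hnear
          · exact (sum_le_sum_of_subset_of_nonneg (Icc_subset_Icc le_rfl (by omega))
              fun m _ _ => hκ m).trans hmass
      _ = Q / 2 + A := by ring
  calc ε n ≤ ∑ k ∈ Icc 1 (n - 1), κ (n - k) * ε k + b := hrec n hn hnN
    _ ≤ ∑ k ∈ Icc 1 (n - 1), κ (n - k) * (w (n - k) * ψ * b) + b := by
        gcongr with k hk
        · exact hκ _
        · exact hprev k hk
    _ = (∑ m ∈ Icc 1 (n - 1), κ m * w m) * ψ * b + b := by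
        rw [sum_mul, sum_mul, ← sum_Icc_one_sub_reflect (fun m => κ m * w m * ψ * b)]
        simp only [mul_assoc]
    _ ≤ (Q / 2 + A) * ψ * b + b := by gcongr
    _ ≤ Q ^ (n / (L + 1) + 1) * b := by rw [pow_succ]; nlinarith

theorem exists_pos_mul_rpow_div_le_half {α a : ℝ} (hα1 : α < 1) (ha : 0 ≤ a) :
    ∃ δ > 0, a * (δ ^ (1 - α) / (1 - α)) ≤ 1 / 2 := by
  have h1α : 0 < 1 - α := by linarith
  refine ⟨((1 - α) / (2 * a + 1)) ^ (1 / (1 - α)), by positivity, ?_⟩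
  rw [← Real.rpow_mul (by positivity), one_div_mul_cancel h1α.ne', Real.rpow_one,
    div_right_comm, div_self h1α.ne', mul_one_div, div_le_div_iff₀ (by positivity) two_pos]
  linarith

theorem floor_div_div_floor_add_one_le {x δ τ : ℝ} (hx : 0 ≤ x) (hδ : 0 < δ) (hτ : 0 < τ) :
    ⌊x / τ⌋₊ / (⌊δ / τ⌋₊ + 1) ≤ ⌊x / δ⌋₊ := by
  apply Nat.le_floor
  calc ((⌊x / τ⌋₊ / (⌊δ / τ⌋₊ + 1) : ℕ) : ℝ) ≤ ⌊x / τ⌋₊ / ((⌊δ / τ⌋₊ + 1 : ℕ) : ℝ) :=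
        Nat.cast_div_le
    _ ≤ (x / τ) / (δ / τ) := by
        push_cast
        gcongr
        · exact Nat.floor_le (by positivity)
        · exact (Nat.lt_floor_add_one _).le
    _ = x / δ := by field_simp

theorem discrete_gronwall_singular (α : ℝ) (hα0 : 0 ≤ α) (hα1 : α < 1)
    (a T : ℝ) (ha : 0 ≤ a) (hT : 0 < T) :
    ∃ C > 0, ∀ (τ b : ℝ) (ε : ℕ → ℝ), 0 < τ → 0 ≤ b →
      (∀ n, 0 ≤ ε n) →
      (∀ n : ℕ, 1 ≤ n → (n : ℝ) * τ ≤ T →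
        ε n ≤ a * τ * ∑ k ∈ Finset.Icc 1 (n - 1), (((n - k : ℕ) : ℝ) * τ) ^ (-α) * ε k + b) →
      ∀ n : ℕ, 1 ≤ n → (n : ℝ) * τ ≤ T → ε n ≤ C * b := by
  obtain ⟨δ, hδ, hδsmall⟩ := exists_pos_mul_rpow_div_le_half hα1 ha
  set A := a * (T ^ (1 - α) / (1 - α))
  have hA : 0 ≤ A := mul_nonneg ha (div_nonneg (by positivity) (by linarith))
  refine ⟨(2 * A + 2) ^ (⌊T / δ⌋₊ + 1), by positivity, fun τ b ε hτ hb _ hrec n hn hnT => ?_⟩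
  set κ : ℕ → ℝ := fun m => a * (τ * ((m : ℝ) * τ) ^ (-α))
  have hmass (M : ℕ) : ∑ m ∈ Icc 1 M, κ m ≤ a * ((M * τ) ^ (1 - α) / (1 - α)) := by
    rw [← mul_sum]
    exact mul_le_mul_of_nonneg_left (sum_Icc_mul_rpow_neg_le_rpow_one_sub_div hα0 hα1 hτ.le M) ha
  have hle_floor {x : ℝ} (hx : 0 ≤ x) (m : ℕ) : m ≤ ⌊x / τ⌋₊ ↔ m * τ ≤ x := by
    rw [Nat.le_floor_iff (by positivity), le_div_iff₀ hτ]
  set L := ⌊δ / τ⌋₊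
  set N := ⌊T / τ⌋₊
  have hnear : ∑ m ∈ Icc 1 L, κ m ≤ 1 / 2 := by
    refine (hmass L).trans (le_trans ?_ hδsmall)
    gcongr
    exact (hle_floor hδ.le L).1 le_rfl
  have htotal : ∑ m ∈ Icc 1 N, κ m ≤ A := by
    refine (hmass N).trans ?_
    simp only [A]
    gcongr
    exact (hle_floor hT.le N).1 le_rfl
  have hrec' (n : ℕ) (hn : 1 ≤ n) (hnN : n ≤ N) :
      ε n ≤ ∑ k ∈ Icc 1 (n - 1), κ (n - k) * ε k + b := by
    convert hrec n hn ((hle_floor hT.le n).1 hnN) using 2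
    simp only [κ, mul_sum, mul_assoc]
  have hnN : n ≤ N := (hle_floor hT.le n).2 hnT
  calc ε n ≤ (2 * A + 2) ^ (n / (L + 1) + 1) * b :=
        le_pow_mul_of_le_sum_kernel_mul_add (fun m => by positivity) hb hnear htotal hrec' n hn hnN
    _ ≤ (2 * A + 2) ^ (⌊T / δ⌋₊ + 1) * b := by
        gcongr
        · linarith
        · exact (Nat.div_le_div_right hnN).trans (floor_div_div_floor_add_one_le hT.le hδ hτ)
end

section
/- Scalar error representation for the exponential Euler recursion applied to a linear inhomogeneous ODE: if u' = a u + g(t) with a ≤ 0, u(0) = u₀, and u_{n+1} = e^{τa} u_n + τ φ₁(τa) g(t_n) with u_0 = u₀, then u_n − u(t_n) = −Σ_{k=0}^{n-1} e^{(n-k-1)τa} ∫₀^τ e^{(τ−ξ)a} ∫₀^ξ g'(t_k+η) dη dξ. -/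
open intervalIntegral Real

/-- `φ₁(z) = (e^z − 1)/z` for `z ≠ 0`, `φ₁(0) = 1`. -/
noncomputable def phi1 (z : ℝ) : ℝ := if z = 0 then 1 else (Real.exp z - 1) / z

lemma phi1_integral (a τ : ℝ) (hτ : τ ≠ 0) :
    ∫ ξ in (0:ℝ)..τ, Real.exp ((τ - ξ) * a) = τ * phi1 (τ * a) := by
  rcases eq_or_ne a 0 with rfl | ha
  · simp [phi1, hτ]
  · have hder : ∀ ξ ∈ Set.uIcc (0:ℝ) τ,
        HasDerivAt (fun ξ => -Real.exp ((τ - ξ) * a) / a) (Real.exp ((τ - ξ) * a)) ξ := by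
      intro ξ _
      have h1 : HasDerivAt (fun ξ : ℝ => (τ - ξ) * a) (-a) ξ := by
        simpa using ((hasDerivAt_id ξ).const_sub τ).mul_const a
      have h2 := (h1.exp.neg).div_const a
      convert h2 using 1
      · rfl
      · rfl
      · rfl
      · rw [eq_div_iff ha]; ring
    rw [intervalIntegral.integral_eq_sub_of_hasDerivAt hder
      ((Continuous.intervalIntegrable (by continuity) _ _))]
    have hτa : τ * a ≠ 0 := mul_ne_zero hτ ha
    simp only [phi1, hτa, if_neg, if_false, sub_self, zero_mul, Real.exp_zero]
    field_simp
    ring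

lemma ftc_shift (g g' : ℝ → ℝ) (hg : ∀ t, HasDerivAt g (g' t) t) (hg'cont : Continuous g')
    (s ξ : ℝ) :
    ∫ η in (0:ℝ)..ξ, g' (s + η) = g (s + ξ) - g s := by
  have hder : ∀ η ∈ Set.uIcc (0:ℝ) ξ, HasDerivAt (fun η => g (s + η)) (g' (s + η)) η := by
    intro η _
    exact (hg (s + η)).comp_const_add s η
  rw [intervalIntegral.integral_eq_sub_of_hasDerivAt hder
    ((hg'cont.comp (continuous_const.add continuous_id)).intervalIntegrable _ _)]
  simp

lemma uex_step (g g' : ℝ → ℝ) (hg : ∀ t, HasDerivAt g (g' t) t)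
    (a τ u₀ : ℝ) (uex : ℝ → ℝ)
    (huex : ∀ t, uex t = Real.exp (t * a) * u₀ + ∫ ξ in (0:ℝ)..t, Real.exp ((t - ξ) * a) * g ξ)
    (s : ℝ) :
    uex (s + τ) = Real.exp (τ * a) * uex s
      + ∫ ξ in (0:ℝ)..τ, Real.exp ((τ - ξ) * a) * g (s + ξ) := by
  have hgc : Continuous g := by
    rw [continuous_iff_continuousAt]; exact fun t => (hg t).differentiableAt.continuousAt
  have hcont : ∀ t : ℝ, Continuous fun ξ => Real.exp ((t - ξ) * a) * g ξ := fun t => by continuity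
  rw [huex, huex]
  have hsplit : ∫ ξ in (0:ℝ)..(s + τ), Real.exp ((s + τ - ξ) * a) * g ξ
      = (∫ ξ in (0:ℝ)..s, Real.exp ((s + τ - ξ) * a) * g ξ)
        + ∫ ξ in s..(s + τ), Real.exp ((s + τ - ξ) * a) * g ξ :=
    (intervalIntegral.integral_add_adjacent_intervals
      ((hcont _).intervalIntegrable _ _) ((hcont _).intervalIntegrable _ _)).symm
  rw [hsplit]
  have h1 : ∫ ξ in (0:ℝ)..s, Real.exp ((s + τ - ξ) * a) * g ξ
      = Real.exp (τ * a) * ∫ ξ in (0:ℝ)..s, Real.exp ((s - ξ) * a) * g ξ := by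
    rw [← intervalIntegral.integral_const_mul]
    apply intervalIntegral.integral_congr
    intro ξ _
    show Real.exp ((s + τ - ξ) * a) * g ξ = Real.exp (τ * a) * (Real.exp ((s - ξ) * a) * g ξ)
    rw [← mul_assoc, ← Real.exp_add]
    ring_nf
  have h2 : ∫ ξ in (0:ℝ)..τ, Real.exp ((τ - ξ) * a) * g (s + ξ)
      = ∫ ξ in s..(s + τ), Real.exp ((s + τ - ξ) * a) * g ξ := by
    have := intervalIntegral.integral_comp_add_right
      (a := (0:ℝ)) (b := τ) (fun x => Real.exp ((s + τ - x) * a) * g x) s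
    rw [zero_add, show τ + s = s + τ by ring] at this
    rw [← this]
    apply intervalIntegral.integral_congr
    intro ξ _
    show Real.exp ((τ - ξ) * a) * g (s + ξ) = Real.exp ((s + τ - (ξ + s)) * a) * g (ξ + s)
    ring_nf
  rw [h1, h2.symm, show (s + τ) * a = τ * a + s * a by ring, Real.exp_add]
  ring

lemma defect_eq (g g' : ℝ → ℝ) (hg : ∀ t, HasDerivAt g (g' t) t) (hg'cont : Continuous g')
    (a τ : ℝ) (hτ : τ ≠ 0) (s : ℝ) :
    τ * phi1 (τ * a) * g s - (∫ ξ in (0:ℝ)..τ, Real.exp ((τ - ξ) * a) * g (s + ξ))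
      = -∫ ξ in (0:ℝ)..τ, Real.exp ((τ - ξ) * a) * ∫ η in (0:ℝ)..ξ, g' (s + η) := by
  have hgc : Continuous g := by
    rw [continuous_iff_continuousAt]; exact fun t => (hg t).differentiableAt.continuousAt
  have h1 : (∫ ξ in (0:ℝ)..τ, Real.exp ((τ - ξ) * a) * ∫ η in (0:ℝ)..ξ, g' (s + η))
      = ∫ ξ in (0:ℝ)..τ, (Real.exp ((τ - ξ) * a) * g (s + ξ)
          - Real.exp ((τ - ξ) * a) * g s) := by
    apply intervalIntegral.integral_congr
    intro ξ _
    show Real.exp ((τ - ξ) * a) * (∫ η in (0:ℝ)..ξ, g' (s + η)) = _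
    rw [ftc_shift g g' hg hg'cont]
    ring
  rw [h1, intervalIntegral.integral_sub
      ((by continuity : Continuous fun ξ => Real.exp ((τ - ξ) * a) * g (s + ξ)).intervalIntegrable _ _)
      ((by continuity : Continuous fun ξ => Real.exp ((τ - ξ) * a) * g s).intervalIntegrable _ _),
    intervalIntegral.integral_mul_const, phi1_integral a τ hτ]
  ring

theorem exp_euler_error_representation
    (a τ u₀ : ℝ) (ha : a ≤ 0) (hτ : 0 < τ)
    (g g' : ℝ → ℝ) (hg : ∀ t, HasDerivAt g (g' t) t) (hg'cont : Continuous g')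
    (uex : ℝ → ℝ)
    (huex : ∀ t, uex t = Real.exp (t * a) * u₀ + ∫ ξ in (0:ℝ)..t, Real.exp ((t - ξ) * a) * g ξ)
    (un : ℕ → ℝ) (hun0 : un 0 = u₀)
    (hun : ∀ n : ℕ, un (n + 1) =
      Real.exp (τ * a) * un n + τ * phi1 (τ * a) * g ((n : ℝ) * τ)) :
    ∀ n : ℕ, un n - uex ((n : ℝ) * τ) =
      -∑ k ∈ Finset.range n, Real.exp (((n - k - 1 : ℕ) : ℝ) * τ * a) *
        ∫ ξ in (0:ℝ)..τ, Real.exp ((τ - ξ) * a) * ∫ η in (0:ℝ)..ξ, g' ((k : ℝ) * τ + η) := by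
  intro n
  induction n with
  | zero => simp [hun0, huex 0]
  | succ n ih =>
    have hcast : ((n + 1 : ℕ) : ℝ) * τ = (n : ℝ) * τ + τ := by push_cast; ring
    rw [hun n, hcast, uex_step g g' hg a τ u₀ uex huex ((n : ℝ) * τ)]
    have hdef := defect_eq g g' hg hg'cont a τ hτ.ne' ((n : ℝ) * τ)
    rw [Finset.sum_range_succ]
    have hlast : Real.exp (((n + 1 - n - 1 : ℕ) : ℝ) * τ * a) = 1 := by
      simp
    have hsum : ∑ k ∈ Finset.range n, Real.exp (((n + 1 - k - 1 : ℕ) : ℝ) * τ * a) *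
          (∫ ξ in (0:ℝ)..τ, Real.exp ((τ - ξ) * a) * ∫ η in (0:ℝ)..ξ, g' ((k : ℝ) * τ + η))
        = Real.exp (τ * a) * ∑ k ∈ Finset.range n, Real.exp (((n - k - 1 : ℕ) : ℝ) * τ * a) *
          (∫ ξ in (0:ℝ)..τ, Real.exp ((τ - ξ) * a) * ∫ η in (0:ℝ)..ξ, g' ((k : ℝ) * τ + η)) := by
      rw [Finset.mul_sum]
      apply Finset.sum_congr rfl
      intro k hk
      have hk' : k < n := Finset.mem_range.mp hk
      have : (n + 1 - k - 1 : ℕ) = (n - k - 1) + 1 := by omega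
      rw [this]
      push_cast
      rw [show (((n - k - 1 : ℕ) : ℝ) + 1) * τ * a = τ * a + ((n - k - 1 : ℕ) : ℝ) * τ * a by ring,
        Real.exp_add]
      ring
    rw [hlast, hsum]
    linear_combination Real.exp (τ * a) * ih + hdef
end

section
/- First-order nonsmooth data convergence of the exponential Euler method for a scalar linear problem: let a ≤ 0, let g : [0,T] → ℝ satisfy |g(t)| ≤ B and |g'(t)| ≤ B/t for 0 < t ≤ T, let u(t) = e^{ta}u₀ + ∫₀^t e^{(t−ξ)a} g(ξ) dξ and u_{n+1} = e^{τa} u_n + τ φ₁(τa) g(t_n) with u_0 = u₀. Then |u_n − u(t_n)| ≤ C τ (|log τ| + 1) for all n with t_n = nτ ≤ T, where C depends only on B and T. -/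
open Set

/-!
The error `eₙ = uₙ − u(tₙ)` obeys `eₙ₊₁ = e^{τa} eₙ − δₙ` with local defect
`δₙ = ∫_{tₙ}^{tₙ₊₁} e^{(tₙ₊₁−ξ)a} (g ξ − g tₙ) dξ`, because `τ φ₁(τa)` is the integral of the kernel
over one step. Since `e^{τa} ≤ 1`, the errors only accumulate: `|eₙ| ≤ ∑ₖ |δₖ|`. On the first
step `|δ₀| ≤ 2Bτ`; later the mean value theorem with `|g'| ≤ B/t` on `[tₖ, tₖ₊₁]` gives
`|δₖ| ≤ Bτ/k`. Both are at most `2Bτ/(k+1)`, so `|eₙ| ≤ 2Bτ Hₙ ≤ 2Bτ (1 + log (T/τ))`.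
-/

open Real MeasureTheory intervalIntegral Finset

noncomputable def duhamel (a u₀ : ℝ) (g : ℝ → ℝ) (t : ℝ) : ℝ :=
  exp (t * a) * u₀ + ∫ ξ in (0 : ℝ)..t, exp ((t - ξ) * a) * g ξ

theorem integral_exp_mul_eq_phi1 (a τ : ℝ) :
    ∫ x in (0 : ℝ)..τ, exp (x * a) = τ * phi1 (τ * a) := by
  rcases eq_or_ne a 0 with rfl | ha
  · simp [phi1]
  rcases eq_or_ne τ 0 with rfl | hτ
  · simp
  rw [integral_comp_mul_right (fun x => exp x) ha, integral_exp, phi1,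
    if_neg (mul_ne_zero hτ ha), smul_eq_mul]
  field_simp
  simp

theorem duhamel_add {a u₀ s τ : ℝ} {g : ℝ → ℝ} (h₁ : IntervalIntegrable g volume 0 s)
    (h₂ : IntervalIntegrable g volume s (s + τ)) :
    duhamel a u₀ g (s + τ) =
      exp (τ * a) * duhamel a u₀ g s + ∫ ξ in s..s + τ, exp ((s + τ - ξ) * a) * g ξ := by
  have hkernel : Continuous fun ξ => exp ((s + τ - ξ) * a) := by fun_prop
  have hshift : exp (τ * a) * ∫ ξ in (0 : ℝ)..s, exp ((s - ξ) * a) * g ξ =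
      ∫ ξ in (0 : ℝ)..s, exp ((s + τ - ξ) * a) * g ξ := by
    rw [← intervalIntegral.integral_const_mul]
    refine integral_congr fun ξ _ => ?_
    simp only [← mul_assoc, ← exp_add]
    ring_nf
  rw [duhamel, duhamel, ← integral_add_adjacent_intervals
    (h₁.continuousOn_mul hkernel.continuousOn) (h₂.continuousOn_mul hkernel.continuousOn),
    mul_add, ← hshift, ← mul_assoc, ← exp_add]
  ring_nf

theorem abs_integral_exp_sub_mul_le {a s τ M : ℝ} {f : ℝ → ℝ} (ha : a ≤ 0) (hτ : 0 ≤ τ)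
    (hM : ∀ ξ ∈ Ioc s (s + τ), |f ξ| ≤ M) :
    |∫ ξ in s..s + τ, exp ((s + τ - ξ) * a) * f ξ| ≤ τ * M := by
  have := norm_integral_le_of_norm_le_const (a := s) (b := s + τ) (C := M)
    (f := fun ξ => exp ((s + τ - ξ) * a) * f ξ) fun ξ hξ => by
      rw [uIoc_of_le (by linarith)] at hξ
      have hkernel : exp ((s + τ - ξ) * a) ≤ 1 :=
        exp_le_one_iff.mpr (mul_nonpos_of_nonneg_of_nonpos (by linarith [hξ.2]) ha)
      rw [norm_mul, norm_of_nonneg (exp_pos _).le]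
      exact (mul_le_of_le_one_left (norm_nonneg _) hkernel).trans (hM ξ hξ)
  rwa [add_sub_cancel_left, abs_of_nonneg hτ, mul_comm] at this

theorem abs_expEuler_step_sub_duhamel_le {a u₀ s τ x M : ℝ} {g : ℝ → ℝ} (ha : a ≤ 0)
    (hτ : 0 ≤ τ) (h₁ : IntervalIntegrable g volume 0 s)
    (h₂ : IntervalIntegrable g volume s (s + τ))
    (hM : ∀ ξ ∈ Ioc s (s + τ), |g ξ - g s| ≤ M) :
    |exp (τ * a) * x + τ * phi1 (τ * a) * g s - duhamel a u₀ g (s + τ)| ≤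
      |x - duhamel a u₀ g s| + τ * M := by
  have hkernel : Continuous fun ξ => exp ((s + τ - ξ) * a) := by fun_prop
  have hphi1 : τ * phi1 (τ * a) * g s = ∫ ξ in s..s + τ, exp ((s + τ - ξ) * a) * g s := by
    rw [intervalIntegral.integral_mul_const, integral_comp_sub_left (fun x => exp (x * a)),
      sub_self, add_sub_cancel_left, integral_exp_mul_eq_phi1]
  have hcontract : |exp (τ * a) * (x - duhamel a u₀ g s)| ≤ |x - duhamel a u₀ g s| := by
    rw [abs_mul, abs_of_pos (exp_pos _)]
    exact mul_le_of_le_one_left (abs_nonneg _)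
      (exp_le_one_iff.mpr (mul_nonpos_of_nonneg_of_nonpos hτ ha))
  calc |exp (τ * a) * x + τ * phi1 (τ * a) * g s - duhamel a u₀ g (s + τ)|
      = |exp (τ * a) * (x - duhamel a u₀ g s) -
          ∫ ξ in s..s + τ, exp ((s + τ - ξ) * a) * (g ξ - g s)| := by
        have hsplit : ∫ ξ in s..s + τ, exp ((s + τ - ξ) * a) * (g ξ - g s) =
            (∫ ξ in s..s + τ, exp ((s + τ - ξ) * a) * g ξ) -
              ∫ ξ in s..s + τ, exp ((s + τ - ξ) * a) * g s := by
          simp only [mul_sub]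
          exact intervalIntegral.integral_sub (h₂.continuousOn_mul hkernel.continuousOn)
            ((hkernel.mul continuous_const).intervalIntegrable _ _)
        rw [duhamel_add h₁ h₂, hphi1, hsplit]
        congr 1
        ring
    _ ≤ |exp (τ * a) * (x - duhamel a u₀ g s)| +
          |∫ ξ in s..s + τ, exp ((s + τ - ξ) * a) * (g ξ - g s)| := abs_sub _ _
    _ ≤ |x - duhamel a u₀ g s| + τ * M :=
        add_le_add hcontract (abs_integral_exp_sub_mul_le ha hτ hM)

theorem abs_sub_le_of_abs_deriv_le_div {g g' : ℝ → ℝ} {B s ξ : ℝ} (hB : 0 ≤ B) (hs : 0 < s)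
    (hsξ : s ≤ ξ) (hg : ∀ t ∈ Icc s ξ, HasDerivAt g (g' t) t)
    (hg' : ∀ t ∈ Icc s ξ, |g' t| ≤ B / t) :
    |g ξ - g s| ≤ B / s * (ξ - s) :=
  norm_image_sub_le_of_norm_deriv_le_segment' (fun t ht => (hg t ht).hasDerivWithinAt)
    (fun t ht => (hg' t (Ico_subset_Icc_self ht)).trans
      (div_le_div_of_nonneg_left hB hs ht.1)) ξ ⟨hsξ, le_rfl⟩

theorem abs_sub_grid_le_two_mul_div_succ {g g' : ℝ → ℝ} {B T τ : ℝ} {m : ℕ} (hB : 0 ≤ B)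
    (hτ : 0 < τ) (hmT : (m + 1) * τ ≤ T) (hg : ∀ t ∈ Icc 0 T, HasDerivAt g (g' t) t)
    (hgB : ∀ t ∈ Icc 0 T, |g t| ≤ B) (hg' : ∀ t ∈ Ioc 0 T, |g' t| ≤ B / t) :
    ∀ ξ ∈ Icc (m * τ) (m * τ + τ), |g ξ - g (m * τ)| ≤ 2 * B / (m + 1) := by
  rintro ξ ⟨hξ₁, hξ₂⟩
  have hm : (0 : ℝ) ≤ m := m.cast_nonneg
  rcases m.eq_zero_or_pos with rfl | hm_pos
  · have hξ : ξ ∈ Icc 0 T := ⟨by simpa using hξ₁, by simp at hξ₂ hmT; linarith⟩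
    have h0 : (0 : ℝ) ∈ Icc 0 T := ⟨le_rfl, by simp at hmT; linarith⟩
    simp only [CharP.cast_eq_zero, zero_mul, zero_add, div_one]
    linarith [abs_sub (g ξ) (g 0), hgB ξ hξ, hgB 0 h0]
  have hm₁ : (1 : ℝ) ≤ m := by exact_mod_cast hm_pos
  have hs : 0 < m * τ := by positivity
  have hsub : Icc (m * τ) ξ ⊆ Icc 0 T := Icc_subset_Icc hs.le (by linarith)
  calc |g ξ - g (m * τ)| ≤ B / (m * τ) * (ξ - m * τ) :=
        abs_sub_le_of_abs_deriv_le_div hB hs hξ₁ (fun t ht => hg t (hsub ht))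
          (fun t ht => hg' t ⟨hs.trans_le ht.1, (hsub ht).2⟩)
    _ ≤ B / (m * τ) * τ := by gcongr; linarith
    _ = B / m := by field_simp
    _ ≤ 2 * B / (m + 1) := by
        rw [div_le_div_iff₀ (by positivity) (by positivity)]
        nlinarith

theorem le_add_sum_of_le_add {e d : ℕ → ℝ} {n : ℕ} (h : ∀ k < n, e (k + 1) ≤ e k + d k) :
    e n ≤ e 0 + ∑ k ∈ range n, d k := by
  induction n with
  | zero => simp
  | succ n ih =>
    rw [sum_range_succ]
    linarith [ih fun k hk => h k (by omega), h n (by omega)]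

theorem harmonic_le_one_add_abs_log_add_abs_log {n : ℕ} {τ T : ℝ} (hτ : 0 < τ)
    (hn : n * τ ≤ T) : (harmonic n : ℝ) ≤ 1 + |log T| + |log τ| := by
  rcases n.eq_zero_or_pos with rfl | hn_pos
  · simp only [harmonic_zero, Rat.cast_zero]
    positivity
  have hn₁ : (1 : ℝ) ≤ n := by exact_mod_cast hn_pos
  have hlog : log n ≤ log T - log τ := by
    rw [← log_div (by nlinarith) hτ.ne']
    exact log_le_log (by positivity) ((le_div_iff₀ hτ).mpr hn)
  linarith [harmonic_le_one_add_log n, le_abs_self (log T), neg_abs_le (log τ)]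

theorem sum_range_div_succ_eq_mul_harmonic (c : ℝ) (n : ℕ) :
    ∑ k ∈ range n, c / (k + 1) = c * harmonic n := by
  rw [harmonic]
  push_cast
  simp only [mul_sum, div_eq_mul_inv]

theorem exp_euler_nonsmooth_convergence_general (B T : ℝ) (hB : 0 ≤ B) :
    ∃ C > 0, ∀ (a τ u₀ : ℝ) (g g' : ℝ → ℝ),
      a ≤ 0 → 0 < τ → τ < 1 →
      (∀ t ∈ Set.Icc (0:ℝ) T, HasDerivAt g (g' t) t) →
      (∀ t ∈ Set.Icc (0:ℝ) T, |g t| ≤ B) →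
      (∀ t ∈ Set.Ioc (0:ℝ) T, |g' t| ≤ B / t) →
      ∀ uex : ℝ → ℝ, (∀ t, uex t = Real.exp (t * a) * u₀ +
          ∫ ξ in (0:ℝ)..t, Real.exp ((t - ξ) * a) * g ξ) →
      ∀ un : ℕ → ℝ, un 0 = u₀ →
      (∀ n : ℕ, un (n + 1) =
        Real.exp (τ * a) * un n + τ * phi1 (τ * a) * g ((n : ℝ) * τ)) →
      ∀ n : ℕ, (n : ℝ) * τ ≤ T →
        |un n - uex ((n : ℝ) * τ)| ≤ C * τ * (|Real.log τ| + 1) := by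
  refine ⟨2 * B * (1 + |log T|) + 1, by positivity, ?_⟩
  intro a τ u₀ g g' ha hτ _ hg hgB hg' uex huex un hun0 hrec n hnT
  obtain rfl : uex = duhamel a u₀ g := funext huex
  have hgc : ContinuousOn g (Icc 0 T) := fun t ht => (hg t ht).continuousAt.continuousWithinAt
  have hint : ∀ p q, 0 ≤ p → p ≤ q → q ≤ T → IntervalIntegrable g volume p q :=
    fun p q hp hpq hq => (hgc.mono (Icc_subset_Icc hp hq)).intervalIntegrable_of_Icc hpq
  have hstep : ∀ k < n, |un (k + 1) - duhamel a u₀ g ((k + 1 : ℕ) * τ)| ≤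
      |un k - duhamel a u₀ g (k * τ)| + τ * (2 * B / (k + 1)) := by
    intro k hk
    have hkT : ((k : ℝ) + 1) * τ ≤ T := by
      have : ((k : ℝ) + 1) ≤ n := by exact_mod_cast hk
      nlinarith
    rw [hrec, Nat.cast_succ, add_one_mul]
    exact abs_expEuler_step_sub_duhamel_le ha hτ.le
      (hint _ _ le_rfl (by positivity) (by linarith))
      (hint _ _ (by positivity) (by linarith) (by linarith))
      fun ξ hξ => abs_sub_grid_le_two_mul_div_succ hB hτ hkT hg hgB hg' ξ (Ioc_subset_Icc_self hξ)
  calc |un n - duhamel a u₀ g (n * τ)|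
      ≤ ∑ k ∈ range n, τ * (2 * B / (k + 1)) := by
        simpa [hun0, duhamel] using
          le_add_sum_of_le_add (e := fun k => |un k - duhamel a u₀ g (k * τ)|) hstep
    _ = ∑ k ∈ range n, 2 * B * τ / (k + 1) := sum_congr rfl fun k _ => by ring
    _ = 2 * B * τ * harmonic n := sum_range_div_succ_eq_mul_harmonic _ _
    _ ≤ 2 * B * τ * (1 + |log T| + |log τ|) := by
        gcongr; exact harmonic_le_one_add_abs_log_add_abs_log hτ hnT
    _ ≤ (2 * B * (1 + |log T|) + 1) * τ * (|log τ| + 1) := by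
        nlinarith [mul_nonneg (mul_nonneg (mul_nonneg hB hτ.le) (abs_nonneg (log T)))
          (abs_nonneg (log τ)), mul_nonneg hτ.le (abs_nonneg (log τ))]

theorem exp_euler_nonsmooth_convergence (B T : ℝ) (hB : 0 ≤ B) (hT : 0 < T) :
    ∃ C > 0, ∀ (a τ u₀ : ℝ) (g g' : ℝ → ℝ),
      a ≤ 0 → 0 < τ → τ < 1 →
      (∀ t ∈ Set.Icc (0:ℝ) T, HasDerivAt g (g' t) t) →
      (∀ t ∈ Set.Icc (0:ℝ) T, |g t| ≤ B) →
      (∀ t ∈ Set.Ioc (0:ℝ) T, |g' t| ≤ B / t) →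
      ∀ uex : ℝ → ℝ, (∀ t, uex t = Real.exp (t * a) * u₀ +
          ∫ ξ in (0:ℝ)..t, Real.exp ((t - ξ) * a) * g ξ) →
      ∀ un : ℕ → ℝ, un 0 = u₀ →
      (∀ n : ℕ, un (n + 1) =
        Real.exp (τ * a) * un n + τ * phi1 (τ * a) * g ((n : ℝ) * τ)) →
      ∀ n : ℕ, (n : ℝ) * τ ≤ T →
        |un n - uex ((n : ℝ) * τ)| ≤ C * τ * (|Real.log τ| + 1) :=
  exp_euler_nonsmooth_convergence_general B T hB
end

section
/- Hölder continuity of the nonlinear term along the solution (scalar model): let a ≤ 0 and let g : (0,T] → ℝ be differentiable with |g'(t)| ≤ B t^{−1}. Then for 0 < t < t + h ≤ T, |g(t+h) − g(t)| ≤ B h / t, and consequently for any μ ∈ [0,1) the integral ∫₀^t |a|^{1+μ} e^{−(t−ξ)|a|} |g(ξ) − g(t)| dξ converges and is bounded by C t^{−μ} log-free in a, with C depending on B, μ, T. -/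
/-!
Cauchy's mean value theorem against `x ↦ x ^ δ` turns `|g'(x)| ≤ B / x` into the Hölder-type
bound `|g u - g s| ≤ (B / δ) ((u - s) / s) ^ δ` for every `δ ∈ (0, 1]`; `δ = 1` is the first claim.
In the integral, `x ^ q e^{-x} ≤ q ^ q` with `x = (t - ξ) |a|` absorbs `|a| ^ (1 + μ)` at the cost
of `(t - ξ) ^ (-(1 + μ))`. Taking `δ = (1 + μ) / 2` leaves the integrable, `a`-independent majorant
`ξ ^ (-δ) (t - ξ) ^ (-δ) ≤ (t / 2) ^ (-δ) (ξ ^ (-δ) + (t - ξ) ^ (-δ))`, whose integral over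
`(0, t)` is a constant times `t ^ (-μ)`.
-/

open Set Real MeasureTheory

theorem rpow_mul_exp_neg_le {q x : ℝ} (hq : 0 < q) (hx : 0 ≤ x) : x ^ q * exp (-x) ≤ q ^ q := by
  have h : x / q ≤ exp (x / q) := by linarith [add_one_le_exp (x / q)]
  have h' : x ^ q / q ^ q ≤ exp x := by
    calc x ^ q / q ^ q = (x / q) ^ q := (div_rpow hx hq.le q).symm
      _ ≤ exp (x / q) ^ q := by gcongr
      _ = exp x := by rw [← exp_mul, div_mul_cancel₀ x hq.ne']
  rw [div_le_iff₀ (by positivity)] at h'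
  calc x ^ q * exp (-x) ≤ exp x * q ^ q * exp (-x) := by gcongr
    _ = q ^ q := by rw [mul_comm (exp x), mul_assoc, ← exp_add, add_neg_cancel, exp_zero, mul_one]

theorem rpow_mul_exp_neg_mul_le {q c s : ℝ} (hq : 0 < q) (hc : 0 ≤ c) (hs : 0 < s) :
    c ^ q * exp (-(s * c)) ≤ q ^ q * s ^ (-q) := by
  have h := rpow_mul_exp_neg_le hq (mul_nonneg hs.le hc)
  rw [mul_rpow hs.le hc, mul_assoc] at h
  rw [rpow_neg hs.le, ← div_eq_mul_inv, le_div_iff₀ (by positivity), mul_comm]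
  exact h

theorem rpow_neg_mul_rpow_neg_le {p x y : ℝ} (hp : 0 ≤ p) (hx : 0 < x) (hy : 0 < y) :
    x ^ (-p) * y ^ (-p) ≤ ((x + y) / 2) ^ (-p) * (x ^ (-p) + y ^ (-p)) := by
  wlog hxy : x ≤ y generalizing x y
  · have := this hy hx (by linarith)
    rwa [add_comm y, add_comm (y ^ (-p)), mul_comm (y ^ (-p))] at this
  have hmax : y ^ (-p) ≤ ((x + y) / 2) ^ (-p) :=
    rpow_le_rpow_of_nonpos (by positivity) (by linarith) (by linarith)
  have hx' : 0 ≤ x ^ (-p) := rpow_nonneg hx.le _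
  have hy' : 0 ≤ y ^ (-p) := rpow_nonneg hy.le _
  calc x ^ (-p) * y ^ (-p) ≤ x ^ (-p) * ((x + y) / 2) ^ (-p) := by gcongr
    _ ≤ ((x + y) / 2) ^ (-p) * (x ^ (-p) + y ^ (-p)) := by
      rw [mul_comm]; gcongr; linarith

section RpowAddRpowSub

variable {r : ℝ}

theorem intervalIntegrable_rpow_sub (hr : -1 < r) (t : ℝ) :
    IntervalIntegrable (fun ξ => (t - ξ) ^ r) volume 0 t := by
  simpa using (intervalIntegral.intervalIntegrable_rpow' hr (a := t) (b := 0)).comp_sub_left t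

theorem intervalIntegrable_rpow_add_rpow_sub (hr : -1 < r) (t : ℝ) :
    IntervalIntegrable (fun ξ => ξ ^ r + (t - ξ) ^ r) volume 0 t :=
  (intervalIntegral.intervalIntegrable_rpow' hr).add (intervalIntegrable_rpow_sub hr t)

theorem integral_rpow_add_rpow_sub (hr : -1 < r) (t : ℝ) :
    ∫ ξ in (0:ℝ)..t, (ξ ^ r + (t - ξ) ^ r) = 2 * (t ^ (r + 1) / (r + 1)) := by
  rw [intervalIntegral.integral_add (intervalIntegral.intervalIntegrable_rpow' hr)
    (intervalIntegrable_rpow_sub hr t),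
    intervalIntegral.integral_comp_sub_left (fun x => x ^ r) t, sub_self, sub_zero,
    integral_rpow (Or.inl hr), zero_rpow (by linarith)]
  ring

variable {f : ℝ → ℝ} {K t : ℝ}

theorem IntervalIntegrable.of_norm_le_rpow_add_rpow_sub (hr : -1 < r) (ht : 0 ≤ t)
    (hf : ContinuousOn f (Ioo 0 t)) (hfK : ∀ ξ ∈ Ioo 0 t, ‖f ξ‖ ≤ K * (ξ ^ r + (t - ξ) ^ r)) :
    IntervalIntegrable f volume 0 t := by
  refine ((intervalIntegrable_rpow_add_rpow_sub hr t).const_mul K).mono_fun' ?_ ?_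
  all_goals rw [uIoc_of_le ht, ← Measure.restrict_congr_set Ioo_ae_eq_Ioc]
  · exact hf.aestronglyMeasurable measurableSet_Ioo
  · exact ae_restrict_of_forall_mem measurableSet_Ioo hfK

theorem integral_le_of_norm_le_rpow_add_rpow_sub (hr : -1 < r) (ht : 0 ≤ t)
    (hf : ContinuousOn f (Ioo 0 t)) (hfK : ∀ ξ ∈ Ioo 0 t, ‖f ξ‖ ≤ K * (ξ ^ r + (t - ξ) ^ r)) :
    ∫ ξ in (0:ℝ)..t, f ξ ≤ K * (2 * (t ^ (r + 1) / (r + 1))) := by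
  rw [← integral_rpow_add_rpow_sub hr t, ← intervalIntegral.integral_const_mul]
  exact intervalIntegral.integral_mono_on_of_le_Ioo ht
    (IntervalIntegrable.of_norm_le_rpow_add_rpow_sub hr ht hf hfK)
    ((intervalIntegrable_rpow_add_rpow_sub hr t).const_mul K)
    fun ξ hξ => (Real.le_norm_self _).trans (hfK ξ hξ)

end RpowAddRpowSub

theorem nonneg_of_abs_le_mul_inv {B x y : ℝ} (hx : 0 < x) (h : |y| ≤ B * x⁻¹) : 0 ≤ B :=
  nonneg_of_mul_nonneg_left ((abs_nonneg y).trans h) (inv_pos.2 hx)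

section DerivLeInv

variable {g g' : ℝ → ℝ} {B T : ℝ}

theorem abs_sub_le_rpow_of_abs_deriv_le_inv (hg : ∀ t ∈ Ioc 0 T, HasDerivAt g (g' t) t)
    (hg' : ∀ t ∈ Ioc 0 T, |g' t| ≤ B * t⁻¹) {δ s u : ℝ} (hδ : 0 < δ) (hδ1 : δ ≤ 1)
    (hs : 0 < s) (hsu : s ≤ u) (huT : u ≤ T) :
    |g u - g s| ≤ B / δ * ((u - s) / s) ^ δ := by
  rcases hsu.eq_or_lt with rfl | hsu
  · simp [zero_rpow hδ.ne']
  have hIcc : Icc s u ⊆ Ioc 0 T := fun x hx => ⟨hs.trans_le hx.1, hx.2.trans huT⟩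
  obtain ⟨c, ⟨hsc, hcu⟩, hc⟩ := exists_ratio_hasDerivAt_eq_ratio_slope (fun x => x ^ δ)
    (fun x => δ * x ^ (δ - 1)) hsu
    (continuousOn_id.rpow_const fun _ _ => Or.inr hδ.le)
    (fun x hx => hasDerivAt_rpow_const (Or.inl (hs.trans hx.1).ne')) g g'
    (fun x hx => (hg x (hIcc hx)).continuousAt.continuousWithinAt)
    (fun x hx => hg x (hIcc (Ioo_subset_Icc_self hx)))
  have hc0 : 0 < c := hs.trans hsc
  have hgc := hg' c (hIcc ⟨hsc.le, hcu.le⟩)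
  have hB : 0 ≤ B := nonneg_of_abs_le_mul_inv hc0 hgc
  have hpow : s ^ δ ≤ u ^ δ := by gcongr
  have hsub : u ^ δ - s ^ δ ≤ (u - s) ^ δ := by
    have := rpow_add_le_add_rpow (sub_nonneg.2 hsu.le) hs.le hδ.le hδ1
    rw [sub_add_cancel] at this
    linarith
  have key : δ * (|g u - g s| * c ^ δ) ≤ B * (u - s) ^ δ := by
    calc δ * (|g u - g s| * c ^ δ) = |(g u - g s) * (δ * c ^ (δ - 1))| * c := by
          rw [abs_mul, abs_of_pos (by positivity : 0 < δ * c ^ (δ - 1)), mul_assoc, mul_assoc,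
            rpow_sub_one hc0.ne', div_mul_cancel₀ _ hc0.ne']
          ring
      _ = (u ^ δ - s ^ δ) * (|g' c| * c) := by
          rw [hc, abs_mul, abs_of_nonneg (sub_nonneg.2 hpow), mul_assoc]
      _ ≤ (u - s) ^ δ * B := by
          gcongr
          calc |g' c| * c ≤ B * c⁻¹ * c := by gcongr
            _ = B := by field_simp
      _ = B * (u - s) ^ δ := mul_comm _ _
  have hsc' : s ^ δ ≤ c ^ δ := by gcongr
  rw [div_rpow (sub_nonneg.2 hsu.le) hs.le, div_mul_div_comm, le_div_iff₀ (by positivity)]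
  calc |g u - g s| * (δ * s ^ δ) ≤ δ * (|g u - g s| * c ^ δ) := by
        rw [mul_left_comm]; gcongr
    _ ≤ B * (u - s) ^ δ := key

theorem rpow_mul_exp_neg_mul_abs_sub_le (hg : ∀ t ∈ Ioc 0 T, HasDerivAt g (g' t) t)
    (hg' : ∀ t ∈ Ioc 0 T, |g' t| ≤ B * t⁻¹) {μ c t ξ : ℝ} (hμ : -1 < μ) (hμ1 : μ ≤ 1)
    (hc : 0 ≤ c) (htT : t ≤ T) (hξ : ξ ∈ Ioo 0 t) :
    c ^ (1 + μ) * exp (-((t - ξ) * c)) * |g ξ - g t| ≤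
      (1 + μ) ^ (1 + μ) * (B / ((1 + μ) / 2)) * (t / 2) ^ (-((1 + μ) / 2)) *
        (ξ ^ (-((1 + μ) / 2)) + (t - ξ) ^ (-((1 + μ) / 2))) := by
  set δ := (1 + μ) / 2 with hδ
  obtain ⟨hξ0, hξt⟩ := hξ
  have hts : 0 < t - ξ := sub_pos.2 hξt
  have hB : 0 ≤ B := nonneg_of_abs_le_mul_inv (hξ0.trans hξt) (hg' t ⟨hξ0.trans hξt, htT⟩)
  have hδ0 : 0 < δ := by linarith
  have hq : 0 < 1 + μ := by linarith
  have holder : |g ξ - g t| ≤ B / δ * ((t - ξ) ^ δ * ξ ^ (-δ)) := by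
    rw [abs_sub_comm, rpow_neg hξ0.le, ← div_eq_mul_inv, ← div_rpow hts.le hξ0.le]
    exact abs_sub_le_rpow_of_abs_deriv_le_inv hg hg' hδ0 (by linarith) hξ0 hξt.le htT
  have kernel := rpow_mul_exp_neg_mul_le hq hc hts
  have hsplit := rpow_neg_mul_rpow_neg_le hδ0.le hξ0 hts
  rw [add_sub_cancel] at hsplit
  calc c ^ (1 + μ) * exp (-((t - ξ) * c)) * |g ξ - g t|
      ≤ (1 + μ) ^ (1 + μ) * (t - ξ) ^ (-(1 + μ)) * (B / δ * ((t - ξ) ^ δ * ξ ^ (-δ))) :=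
        mul_le_mul kernel holder (abs_nonneg _)
          (mul_nonneg (rpow_nonneg hq.le _) (rpow_nonneg hts.le _))
    _ = (1 + μ) ^ (1 + μ) * (B / δ) * (ξ ^ (-δ) * (t - ξ) ^ (-δ)) := by
        rw [show -δ = -(1 + μ) + δ by rw [hδ]; ring, rpow_add hts]; ring
    _ ≤ (1 + μ) ^ (1 + μ) * (B / δ) * ((t / 2) ^ (-δ) * (ξ ^ (-δ) + (t - ξ) ^ (-δ))) :=
        mul_le_mul_of_nonneg_left hsplit (mul_nonneg (rpow_nonneg hq.le _) (div_nonneg hB hδ0.le))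
    _ = _ := by ring

theorem exists_integral_rpow_mul_exp_neg_mul_abs_sub_le
    (hg : ∀ t ∈ Ioc 0 T, HasDerivAt g (g' t) t) (hg' : ∀ t ∈ Ioc 0 T, |g' t| ≤ B * t⁻¹)
    {μ : ℝ} (hμ : -1 < μ) (hμ1 : μ < 1) :
    ∃ C, ∀ c, 0 ≤ c → ∀ t ∈ Ioc 0 T,
      IntervalIntegrable (fun ξ => c ^ (1 + μ) * exp (-((t - ξ) * c)) * |g ξ - g t|) volume 0 t ∧
      ∫ ξ in (0:ℝ)..t, c ^ (1 + μ) * exp (-((t - ξ) * c)) * |g ξ - g t| ≤ C * t ^ (-μ) := by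
  set δ := (1 + μ) / 2 with hδ
  refine ⟨(1 + μ) ^ (1 + μ) * (B / δ) * 2 ^ δ * (2 / (1 - δ)), fun c hc t ⟨ht0, htT⟩ => ?_⟩
  have hgc : ContinuousOn g (Ioo 0 t) := fun x hx =>
    (hg x ⟨hx.1, hx.2.le.trans htT⟩).continuousAt.continuousWithinAt
  have hcont : ContinuousOn (fun ξ => c ^ (1 + μ) * exp (-((t - ξ) * c)) * |g ξ - g t|)
      (Ioo 0 t) := by
    fun_prop
  have hbound : ∀ ξ ∈ Ioo 0 t, ‖c ^ (1 + μ) * exp (-((t - ξ) * c)) * |g ξ - g t|‖ ≤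
      (1 + μ) ^ (1 + μ) * (B / δ) * (t / 2) ^ (-δ) * (ξ ^ (-δ) + (t - ξ) ^ (-δ)) := fun ξ hξ =>
    (Real.norm_of_nonneg (by positivity)).trans_le
      (rpow_mul_exp_neg_mul_abs_sub_le hg hg' hμ hμ1.le hc htT hξ)
  have hr : -1 < -δ := by linarith
  refine ⟨IntervalIntegrable.of_norm_le_rpow_add_rpow_sub hr ht0.le hcont hbound,
    (integral_le_of_norm_le_rpow_add_rpow_sub hr ht0.le hcont hbound).trans_eq ?_⟩
  have hscale : (t / 2) ^ (-δ) * t ^ (-δ + 1) = 2 ^ δ * t ^ (-μ) := by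
    rw [div_rpow ht0.le zero_le_two, rpow_neg zero_le_two, div_inv_eq_mul, mul_right_comm,
      ← rpow_add ht0, show -δ + (-δ + 1) = -μ by rw [hδ]; ring, mul_comm]
  rw [show 1 - δ = -δ + 1 by ring]
  linear_combination ((1 + μ) ^ (1 + μ) * (B / δ) * (2 / (-δ + 1))) * hscale

end DerivLeInv

theorem holder_continuity_and_singular_integral_bound_general
    (B T : ℝ)
    (g g' : ℝ → ℝ) (hg : ∀ t ∈ Ioc (0:ℝ) T, HasDerivAt g (g' t) t)
    (hg' : ∀ t ∈ Ioc (0:ℝ) T, |g' t| ≤ B * t⁻¹) :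
    (∀ t h : ℝ, 0 < t → 0 < h → t + h ≤ T → |g (t + h) - g t| ≤ B * h / t) ∧
    (∀ μ : ℝ, 0 ≤ μ → μ < 1 → ∃ C > 0, ∀ a : ℝ, a ≤ 0 → ∀ t ∈ Ioc (0:ℝ) T,
      IntervalIntegrable
        (fun ξ => |a| ^ (1 + μ) * Real.exp (-((t - ξ) * |a|)) * |g ξ - g t|)
        MeasureTheory.volume 0 t ∧
      (∫ ξ in (0:ℝ)..t, |a| ^ (1 + μ) * Real.exp (-((t - ξ) * |a|)) * |g ξ - g t|) ≤
        C * t ^ (-μ)) := by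
  refine ⟨fun t h ht hh hth => ?_, fun μ hμ0 hμ1 => ?_⟩
  · simpa [mul_div_assoc] using
      abs_sub_le_rpow_of_abs_deriv_le_inv hg hg' one_pos le_rfl ht (by linarith) hth
  · obtain ⟨C, hC⟩ := exists_integral_rpow_mul_exp_neg_mul_abs_sub_le hg hg' (by linarith) hμ1
    refine ⟨max C 1, lt_max_of_lt_right one_pos, fun a _ t ht => ?_⟩
    obtain ⟨hint, hle⟩ := hC |a| (abs_nonneg a) t ht
    exact ⟨hint, hle.trans (mul_le_mul_of_nonneg_right (le_max_left C 1) (rpow_nonneg ht.1.le _))⟩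

theorem holder_continuity_and_singular_integral_bound
    (B T : ℝ) (hB : 0 ≤ B) (hT : 0 < T)
    (g g' : ℝ → ℝ) (hg : ∀ t ∈ Ioc (0:ℝ) T, HasDerivAt g (g' t) t)
    (hg' : ∀ t ∈ Ioc (0:ℝ) T, |g' t| ≤ B * t⁻¹) :
    (∀ t h : ℝ, 0 < t → 0 < h → t + h ≤ T → |g (t + h) - g t| ≤ B * h / t) ∧
    (∀ μ : ℝ, 0 ≤ μ → μ < 1 → ∃ C > 0, ∀ a : ℝ, a ≤ 0 → ∀ t ∈ Ioc (0:ℝ) T,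
      IntervalIntegrable
        (fun ξ => |a| ^ (1 + μ) * Real.exp (-((t - ξ) * |a|)) * |g ξ - g t|)
        MeasureTheory.volume 0 t ∧
      (∫ ξ in (0:ℝ)..t, |a| ^ (1 + μ) * Real.exp (-((t - ξ) * |a|)) * |g ξ - g t|) ≤
        C * t ^ (-μ)) :=
  holder_continuity_and_singular_integral_bound_general B T g g' hg hg'
end

section
/- Splitting identity for exponentials of commuting nonpositive reals: for a, b ≤ 0 and t ≥ 0, e^{t(a+b)} = e^{ta} e^{tb}, and moreover φ₁(t(a+b)) − φ₁(ta)φ₁(tb) = ∫₀¹∫₀¹∫_η^ξ t e^{t(1−η)b} a e^{t(1−σ)a} dσ dη dξ, where the inner integral is oriented from η to ξ. -/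
/-- `φ₁(z) = ∫₀¹ e^{(1−ξ)z} dξ`. -/
noncomputable def phi1I (z : ℝ) : ℝ := ∫ ξ in (0:ℝ)..1, Real.exp ((1 - ξ) * z)

/-! Integrating `x e^{(1−σ)x}` over `σ` from `η` to `ξ` turns the inner integral into
`e^{(1−η)(x+y)} − e^{(1−ξ)x} e^{(1−η)y}`; the two outer integrals over `[0,1]` then produce
`φ₁(x+y) − φ₁(x) φ₁(y)` term by term, and `x = ta`, `y = tb` gives the identity. -/

open intervalIntegral

theorem integral_mul_exp_one_sub_mul (x η ξ : ℝ) :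
    ∫ σ in η..ξ, x * Real.exp ((1 - σ) * x) =
      Real.exp ((1 - η) * x) - Real.exp ((1 - ξ) * x) := by
  have hderiv : ∀ σ : ℝ, HasDerivAt (fun σ : ℝ => -Real.exp ((1 - σ) * x))
      (x * Real.exp ((1 - σ) * x)) σ := fun σ =>
    ((((hasDerivAt_id' σ).const_sub 1).mul_const x).exp).neg.congr_deriv (by ring)
  rw [integral_eq_sub_of_hasDerivAt (fun σ _ => hderiv σ)
    (Continuous.intervalIntegrable (by fun_prop) _ _)]
  ring

theorem phi1I_add_sub_mul (x y : ℝ) :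
    phi1I (x + y) - phi1I x * phi1I y =
      ∫ ξ in (0:ℝ)..1, ∫ η in (0:ℝ)..1, ∫ σ in η..ξ,
        Real.exp ((1 - η) * y) * (x * Real.exp ((1 - σ) * x)) := by
  have inner : ∀ ξ η : ℝ, ∫ σ in η..ξ, Real.exp ((1 - η) * y) * (x * Real.exp ((1 - σ) * x)) =
      Real.exp ((1 - η) * (x + y)) - Real.exp ((1 - ξ) * x) * Real.exp ((1 - η) * y) := by
    intro ξ η
    rw [integral_const_mul, integral_mul_exp_one_sub_mul, mul_sub, ← Real.exp_add,
      ← Real.exp_add, ← Real.exp_add]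
    ring_nf
  have middle : ∀ ξ : ℝ, ∫ η in (0:ℝ)..1,
      (Real.exp ((1 - η) * (x + y)) - Real.exp ((1 - ξ) * x) * Real.exp ((1 - η) * y)) =
      phi1I (x + y) - Real.exp ((1 - ξ) * x) * phi1I y := by
    intro ξ
    rw [integral_sub (Continuous.intervalIntegrable (by fun_prop) _ _)
      (Continuous.intervalIntegrable (by fun_prop) _ _), integral_const_mul]
    rfl
  simp only [inner, middle]
  rw [integral_sub intervalIntegrable_const
    (Continuous.intervalIntegrable (by fun_prop) _ _), integral_const, integral_mul_const]
  simp [phi1I]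

theorem splitting_identity_exponentials_general (a b t : ℝ) :
    Real.exp (t * (a + b)) = Real.exp (t * a) * Real.exp (t * b) ∧
    phi1I (t * (a + b)) - phi1I (t * a) * phi1I (t * b) =
      ∫ ξ in (0:ℝ)..1, ∫ η in (0:ℝ)..1, ∫ σ in η..ξ,
        t * Real.exp (t * (1 - η) * b) * a * Real.exp (t * (1 - σ) * a) := by
  refine ⟨by rw [mul_add, Real.exp_add], ?_⟩
  rw [mul_add, phi1I_add_sub_mul]
  congr! 4 with ξ η σ
  ring_nf

theorem splitting_identity_exponentials (a b t : ℝ) (ha : a ≤ 0) (hb : b ≤ 0)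
    (ht : 0 ≤ t) :
    Real.exp (t * (a + b)) = Real.exp (t * a) * Real.exp (t * b) ∧
    phi1I (t * (a + b)) - phi1I (t * a) * phi1I (t * b) =
      ∫ ξ in (0:ℝ)..1, ∫ η in (0:ℝ)..1, ∫ σ in η..ξ,
        t * Real.exp (t * (1 - η) * b) * a * Real.exp (t * (1 - σ) * a) :=
  splitting_identity_exponentials_general a b t
end
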